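/- arXiv:2410.03347 — 3 statements merged into one kernel-verified Lean document; each statement's English description precedes it below -/
import Mathlib

section
/- Let G₁, G₂, G_T be commutative groups and e : G₁ → G₂ → G_T a bilinear map (e(a*b, c) = e(a,c)*e(b,c) and e(a, c*d) = e(a,c)*e(a,d)) satisfying e(g^x, h) = e(g, h)^x = e(g, h^x) for all integers x. Fix a generator g ∈ G₁, a hash H : ℕ → G₂, and sk : ℤ with pk = g^sk. Then the aggregated signature S = ∏_{i=1}^{m} (H(i) * (H(i-1))⁻¹)^sk satisfies the verification equation e(g, S) = e(pk, H(m) * (H(0))⁻¹). -/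
theorem pairing_verification_of_aggregate
    {G₁ G₂ G_T : Type*} [CommGroup G₁] [CommGroup G₂] [CommGroup G_T]
    (e : G₁ → G₂ → G_T)
    (hbil₁ : ∀ a b c, e (a * b) c = e a c * e b c)
    (hbil₂ : ∀ a c d, e a (c * d) = e a c * e a d)
    (hexp : ∀ (a : G₁) (b : G₂) (x : ℤ), e (a ^ x) b = (e a b) ^ x ∧ (e a b) ^ x = e a (b ^ x))
    (g : G₁) (hg : ∀ x : G₁, x ∈ Subgroup.zpowers g)
    (H : ℕ → G₂) (sk : ℤ) (pk : G₁) (hpk : pk = g ^ sk)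
    (m : ℕ) (hm : 1 ≤ m)
    (S : G₂) (hS : S = ∏ i ∈ Finset.Icc 1 m, (H i * (H (i - 1))⁻¹) ^ sk) :
    e g S = e pk (H m * (H 0)⁻¹) := by
  have htel : ∏ i ∈ Finset.Icc 1 m, (H i * (H (i - 1))⁻¹) = H m * (H 0)⁻¹ := by
    have h := Finset.prod_range_div (fun i => H i) m
    rw [show Finset.Icc 1 m = Finset.Ico 1 (m + 1) by rfl, Finset.prod_Ico_eq_prod_range]
    simpa [div_eq_mul_inv, Nat.add_sub_cancel, Nat.add_comm] using h
  have hSeq : S = (H m * (H 0)⁻¹) ^ sk := by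
    rw [hS, ← htel, Finset.prod_zpow]
  rw [hSeq, ← (hexp g (H m * (H 0)⁻¹) sk).2, ← (hexp g (H m * (H 0)⁻¹) sk).1, hpk]
end

section
/- Let G₁, G₂, G_T be commutative groups with a bilinear map e : G₁ → G₂ → G_T, generator g ∈ G₁, and hash H into G₂. For n message pairs (x_i, z_i) with corresponding key sets, let apk_i = g^(sk_i) where sk_i = ∑ of the secret keys in the i-th set, and let S = ∏_{i=1}^{n} (H(z_i) * (H(x_i))⁻¹)^(sk_i). Then e(g, S) = ∏_{i=1}^{n} e(apk_i, H(z_i) * (H(x_i))⁻¹). -/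
theorem multi_signature_verification_correctness
    {G₁ G₂ G_T : Type*} [CommGroup G₁] [CommGroup G₂] [CommGroup G_T]
    (e : G₁ → G₂ → G_T)
    (hbil₁ : ∀ a b c, e (a * b) c = e a c * e b c)
    (hbil₂ : ∀ a c d, e a (c * d) = e a c * e a d)
    (hexp : ∀ (a : G₁) (b : G₂) (x : ℤ), e (a ^ x) b = (e a b) ^ x ∧ (e a b) ^ x = e a (b ^ x))
    (g : G₁) (H : ℕ → G₂)
    (n : ℕ) (x z : Fin n → ℕ) (sk : Fin n → ℤ)
    (apk : Fin n → G₁) (hapk : ∀ i, apk i = g ^ (sk i))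
    (S : G₂) (hS : S = ∏ i : Fin n, (H (z i) * (H (x i))⁻¹) ^ (sk i)) :
    e g S = ∏ i : Fin n, e (apk i) (H (z i) * (H (x i))⁻¹) := by
  have hone : e g 1 = 1 := by
    have := hbil₂ g 1 1
    rw [mul_one] at this
    exact (left_eq_mul.mp this)
  let φ : G₂ →* G_T := { toFun := e g, map_one' := hone, map_mul' := fun a b => hbil₂ g a b }
  have : e g S = ∏ i : Fin n, e g ((H (z i) * (H (x i))⁻¹) ^ (sk i)) := by
    rw [hS]; exact map_prod φ _ _
  rw [this]
  refine Finset.prod_congr rfl fun i _ => ?_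
  rw [hapk i, (hexp g (H (z i) * (H (x i))⁻¹) (sk i)).1,
    (hexp g (H (z i) * (H (x i))⁻¹) (sk i)).2]
end

section
/- Let G be a commutative group, H : ℕ → G, and for each epoch i ∈ [1, m] let Q_i be a set of signer keys (integers) that is constant on each subperiod determined by break points 0 = j₀ < ... < j_ℓ = m (i.e., for i ∈ [j_{k-1}+1, j_k], Q_i = Q^{(k)}). Then the full node's aggregate S = ∏_{k=1}^{ℓ} ∏_{i=j_{k-1}+1}^{j_k} ∏_{sk ∈ Q^{(k)}} (f(i) * (f(i-1))⁻¹)^(sk), where f(i) = H(i) except f(j_k) incorporates the break-point message, equals ∏_{k=1}^{ℓ} (f(j_k) * (f(j_{k-1}))⁻¹)^(∑_{sk ∈ Q^{(k)}} sk). -/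
lemma telescope_Ioc {G : Type*} [CommGroup G] (f : ℕ → G) (a b : ℕ) (h : a ≤ b) :
    ∏ i ∈ Finset.Ioc a b, (f i * (f (i - 1))⁻¹) = f b * (f a)⁻¹ := by
  induction b, h using Nat.le_induction with
  | base => simp
  | succ b hb ih =>
      rw [Finset.prod_Ioc_succ_top hb, ih]
      simp only [Nat.add_sub_cancel]
      rw [mul_comm (f (b + 1)) (f b)⁻¹, ← mul_assoc,
        mul_right_comm (f b) (f a)⁻¹ (f b)⁻¹, mul_inv_cancel, one_mul, mul_comm]

theorem full_node_aggregate_collapse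
    {G : Type*} [CommGroup G] (H : ℕ → G) (f : ℕ → G)
    (ℓ m : ℕ) (hℓ : 1 ≤ ℓ) (j : ℕ → ℕ)
    (hj0 : j 0 = 0) (hjℓ : j ℓ = m)
    (hmono : ∀ k < ℓ, j k < j (k + 1))
    (Q : ℕ → Finset ℤ)
    (hf : ∀ i, (∀ k ∈ Finset.Icc 1 ℓ, i ≠ j k) → f i = H i) :
    ∏ k ∈ Finset.Icc 1 ℓ, ∏ i ∈ Finset.Icc (j (k - 1) + 1) (j k),
        ∏ sk ∈ Q k, (f i * (f (i - 1))⁻¹) ^ sk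
      = ∏ k ∈ Finset.Icc 1 ℓ,
          (f (j k) * (f (j (k - 1)))⁻¹) ^ (∑ sk ∈ Q k, sk) := by
  apply Finset.prod_congr rfl
  intro k hk
  simp only [Finset.mem_Icc] at hk
  have hle : j (k - 1) ≤ j k := by
    have := hmono (k - 1) (by omega)
    have hk1 : k - 1 + 1 = k := by omega
    rw [hk1] at this; omega
  calc ∏ i ∈ Finset.Icc (j (k - 1) + 1) (j k), ∏ sk ∈ Q k,
        (f i * (f (i - 1))⁻¹) ^ sk
      = ∏ i ∈ Finset.Icc (j (k - 1) + 1) (j k),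
        (f i * (f (i - 1))⁻¹) ^ (∑ sk ∈ Q k, sk) := by
        refine Finset.prod_congr rfl fun i _ => ?_
        induction (Q k) using Finset.cons_induction with
        | empty => simp
        | cons a s ha ih => simp [Finset.prod_insert ha, Finset.sum_insert ha, zpow_add, ih, mul_comm]
    _ = (∏ i ∈ Finset.Icc (j (k - 1) + 1) (j k),
        (f i * (f (i - 1))⁻¹)) ^ (∑ sk ∈ Q k, sk) := by
        rw [← Finset.prod_zpow]
    _ = (f (j k) * (f (j (k - 1)))⁻¹) ^ (∑ sk ∈ Q k, sk) := by
        rw [Finset.Icc_add_one_left_eq_Ioc, telescope_Ioc f _ _ hle]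
end
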